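/- Let J be the group defined by the presentation ⟨g, x | g⁴, x⁴ g x⁻³ g²⟩ (the quotient of the free group on two generators g, x by the normal closure of the relators g⁴ and x⁴ g x⁻³ g²). Then J is finite of order 4, and the images of g and x in J are equal (so J is cyclic of order four, generated by the image of x). -/

import Mathlib

/-!
Rotating the relator `x⁴ g x⁻³ g²` gives `x g = x⁻³ g⁻² x³`, so `x g` is an involution. Using this,
the relator rewrites as `x⁴ g x⁻⁴ = g⁻¹ x g`: conjugation by `x⁴` sends `g` to a conjugate of `x`.
Taking fourth powers, `g⁴ = 1` forces `x⁴ = 1`, and then the same identity reads `g = g⁻¹ x g`,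
i.e. `g = x`. Hence the group is cyclic, generated by `x` of order dividing `4`, and the map onto
`ℤ/4` sending both generators to `1` shows that the order is exactly `4`.
-/

/-- The relators `g⁴` and `x⁴ g x⁻³ g²` in the free group on two generators
`g = of 0`, `x = of 1`. -/
def stmt6Rels : Set (FreeGroup (Fin 2)) :=
  {FreeGroup.of 0 ^ 4,
   FreeGroup.of 1 ^ 4 * FreeGroup.of 0 * ((FreeGroup.of 1)⁻¹) ^ 3 * FreeGroup.of 0 ^ 2}

section Relators

variable {G : Type*} [Group G] {g x : G}

theorem mul_sq_eq_one_of_relators (hg : g ^ 4 = 1) (h : x ^ 4 * g * x⁻¹ ^ 3 * g ^ 2 = 1) :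
    (x * g) ^ 2 = 1 := by
  have hxg : x * g = (x ^ 3)⁻¹ * (g ^ 2)⁻¹ * x ^ 3 := by
    calc x * g = (x ^ 3)⁻¹ * (x ^ 4 * g * x⁻¹ ^ 3 * g ^ 2) * (g ^ 2)⁻¹ * x ^ 3 := by group
      _ = (x ^ 3)⁻¹ * (g ^ 2)⁻¹ * x ^ 3 := by rw [h, mul_one]
  calc (x * g) ^ 2 = (x ^ 3)⁻¹ * (g ^ 4)⁻¹ * x ^ 3 := by rw [sq, hxg]; group
    _ = 1 := by rw [hg, inv_one, mul_one, inv_mul_cancel]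

theorem pow_four_conj_eq_of_relators (h : x ^ 4 * g * x⁻¹ ^ 3 * g ^ 2 = 1)
    (hxg : (x * g) ^ 2 = 1) : x ^ 4 * g * (x ^ 4)⁻¹ = g⁻¹ * x * g := by
  have hinv : (x * g)⁻¹ = x * g := inv_eq_of_mul_eq_one_right (by rw [← sq, hxg])
  calc x ^ 4 * g * (x ^ 4)⁻¹ = (x ^ 4 * g * x⁻¹ ^ 3 * g ^ 2) * g⁻¹ * (x * g)⁻¹ := by group
    _ = g⁻¹ * x * g := by rw [h, one_mul, hinv, mul_assoc]

theorem eq_of_relators (hg : g ^ 4 = 1) (h : x ^ 4 * g * x⁻¹ ^ 3 * g ^ 2 = 1) : g = x := by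
  have hconj := pow_four_conj_eq_of_relators h (mul_sq_eq_one_of_relators hg h)
  have hx : x ^ 4 = 1 := by
    refine (conj_eq_one_iff (a := g⁻¹)).mp ?_
    rw [← conj_pow, inv_inv, ← hconj, conj_pow, hg, mul_one, mul_inv_cancel]
  rw [hx, one_mul, inv_one, mul_one] at hconj
  calc g = g * (g⁻¹ * x * g) * g⁻¹ := by rw [← hconj]; group
    _ = x := by group

end Relators

namespace Stmt6

open PresentedGroup

theorem of_zero_pow_four : (of 0 : PresentedGroup stmt6Rels) ^ 4 = 1 := by
  have h := one_of_mem (rels := stmt6Rels) (Set.mem_insert _ _)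
  rwa [map_pow] at h

theorem of_relator :
    (of 1 : PresentedGroup stmt6Rels) ^ 4 * of 0 * (of 1)⁻¹ ^ 3 * of 0 ^ 2 = 1 := by
  have h := one_of_mem (rels := stmt6Rels) (Set.mem_insert_of_mem _ rfl)
  rwa [map_mul, map_mul, map_mul, map_pow, map_pow, map_pow, map_inv] at h

theorem of_zero_eq_of_one : (of 0 : PresentedGroup stmt6Rels) = of 1 :=
  eq_of_relators of_zero_pow_four of_relator

theorem mem_zpowers_of_one (y : PresentedGroup stmt6Rels) : y ∈ Subgroup.zpowers (of 1) := by
  refine generated_by _ _ (fun i => ?_) y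
  fin_cases i
  · exact of_zero_eq_of_one ▸ Subgroup.mem_zpowers _
  · exact Subgroup.mem_zpowers _

def toZMod : PresentedGroup stmt6Rels →* Multiplicative (ZMod 4) :=
  toGroup (f := fun _ => Multiplicative.ofAdd 1) (by rintro r (rfl | rfl) <;> decide)

theorem orderOf_of_one : orderOf (of 1 : PresentedGroup stmt6Rels) = 4 := by
  refine Nat.dvd_antisymm (orderOf_dvd_of_pow_eq_one ?_) ?_
  · rw [← of_zero_eq_of_one, of_zero_pow_four]
  · have h := orderOf_map_dvd toZMod (of 1)
    rwa [toZMod, toGroup.of, orderOf_ofAdd_eq_addOrderOf, ZMod.addOrderOf_one] at h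

end Stmt6

/-- The group `J = ⟨g, x | g⁴, x⁴ g x⁻³ g²⟩` is finite of order 4, and the images
of `g` and `x` in `J` coincide. -/
theorem stmt_6 :
    Nat.card (PresentedGroup stmt6Rels) = 4 ∧
      (PresentedGroup.of 0 : PresentedGroup stmt6Rels) = PresentedGroup.of 1 :=
  ⟨(orderOf_eq_card_of_forall_mem_zpowers Stmt6.mem_zpowers_of_one).symm.trans
    Stmt6.orderOf_of_one, Stmt6.of_zero_eq_of_one⟩
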